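/- Let G be a graph obtained as follows: take a single vertex v, graphs A₁, …, A_t each isomorphic to some C_{s,k} with s ∈ {3,4,5} and k ∈ {1,2,3}, and graphs B₁, …, B_s each isomorphic to a cycle C₃, C₄ or C₅, where s, t ≥ 0 and s + t ≥ 2; identify the leaf of each Aᵢ with v and identify one vertex of each Bᵢ with v. If |V(G)| ≥ 9, then γ₂ᵈ(G) ≤ |V(G)|/3. -/

import Mathlib

/-!
Each gadget `P ∪ {v}` carries small local sets `S ⊆ P` with `3 |S| ≤ |P|` which dominate
`P \ S` by themselves, with the help of `v`, or with the help of a neighbour of `v` lying in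
another gadget, and which see `v` either as a neighbour or at distance two. Once `v` is put into
the dominating set, the gadgets `C₃`, `C_{3,3}`, `C_{4,2}`, `C_{5,1}` have two vertices to spare
and `C_{3,2}`, `C_{5,3}`, `C_{4,1}`, `C₅` one. If these spare vertices add up to two, `v` together
with the local sets is small enough. Otherwise at most one gadget has a spare vertex, `v` is left
out, and the union of local sets dominates `v` through a neighbour in one gadget or through two
vertices at distance two in two gadgets. The one configuration in which this fails, `C_{4,1}` or
`C₅` together with a single `C₄`, has only eight vertices.
-/

def IsDisjDomSet {V : Type*} (G : SimpleGraph V) (D : Set V) : Prop :=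
  ∀ v : V, v ∉ D → (∃ u ∈ D, G.Adj v u) ∨
    (∃ u ∈ D, ∃ w ∈ D, u ≠ w ∧ G.dist v u = 2 ∧ G.dist v w = 2)

noncomputable def disjDomNum {V : Type*} (G : SimpleGraph V) : ℕ :=
  sInf {n : ℕ | ∃ D : Set V, IsDisjDomSet G D ∧ D.ncard = n}

/-- The tadpole graph `C_{s,k}` (for `s ≥ 3`, `k ≥ 1`): a cycle on the vertices
`0, 1, …, s-1` together with a pendant path `0 – s – (s+1) – ⋯ – (s+k-1)` attached at the
cycle vertex `0`.  The vertex `s+k-1` is the leaf of `C_{s,k}`. -/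
def tadpoleGraph (s k : ℕ) : SimpleGraph (Fin (s + k)) :=
  SimpleGraph.fromRel (fun a b =>
    ((a : ℕ) + 1 = (b : ℕ) ∧ (b : ℕ) < s) ∨ ((a : ℕ) = s - 1 ∧ (b : ℕ) = 0) ∨
    ((a : ℕ) = 0 ∧ (b : ℕ) = s) ∨ (s ≤ (a : ℕ) ∧ (a : ℕ) + 1 = (b : ℕ)))

open SimpleGraph Set

instance (s k : ℕ) : DecidableRel (tadpoleGraph s k).Adj := fun a b =>
  decidable_of_iff' _ (fromRel_adj _ a b)

theorem Set.ncard_compl_singleton {α : Type*} [Finite α] (a : α) :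
    ({a}ᶜ : Set α).ncard = Nat.card α - 1 := by
  have := ncard_add_ncard_compl {a}
  rw [ncard_singleton] at this
  omega

namespace SimpleGraph

variable {V W : Type*} {G : SimpleGraph V} {H : SimpleGraph W}

theorem dist_eq_two_iff {u w : V} :
    G.dist u w = 2 ↔ u ≠ w ∧ ¬G.Adj u w ∧ ∃ c, G.Adj u c ∧ G.Adj c w := by
  rw [dist, ENat.toNat_eq_iff two_ne_zero, Nat.cast_ofNat, edist_eq_two_iff]
  simp only [Set.Nonempty, mem_commonNeighbors, G.adj_comm w]

/-- Found before `instDecidableEqNat`, which cannot evaluate `dist`; this lets `decide` check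
distances in small graphs. -/
instance [Fintype V] [DecidableEq V] [DecidableRel G.Adj] (u w : V) :
    Decidable (G.dist u w = 2) :=
  decidable_of_iff' _ dist_eq_two_iff

theorem Embedding.dist_eq_two (f : H ↪g G) {a b : W} (h : H.dist a b = 2) :
    G.dist (f a) (f b) = 2 := by
  obtain ⟨hne, hnadj, c, hac, hcb⟩ := dist_eq_two_iff.mp h
  exact dist_eq_two_iff.mpr ⟨f.injective.ne hne, f.map_adj_iff.not.mpr hnadj, f c,
    f.map_adj_iff.mpr hac, f.map_adj_iff.mpr hcb⟩

end SimpleGraph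

section Domination

variable {V W : Type*} {G : SimpleGraph V} {H : SimpleGraph W}

def DisjDominates (G : SimpleGraph V) (D : Set V) (x : V) : Prop :=
  (∃ u ∈ D, G.Adj x u) ∨ ∃ u ∈ D, ∃ w ∈ D, u ≠ w ∧ G.dist x u = 2 ∧ G.dist x w = 2

def DisjDominatesOn (G : SimpleGraph V) (D P : Set V) : Prop :=
  ∀ x ∈ P, x ∉ D → DisjDominates G D x

/-- The vertices of `P \ S` that `S` fails to dominate are neighbours of `v` at distance two
from `S`: any vertex of `D` adjacent to `v` outside `P` supplies the missing second vertex. -/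
def NearlyDisjDominatesOn (G : SimpleGraph V) (v : V) (S P : Set V) : Prop :=
  ∀ x ∈ P, x ∉ S → DisjDominates G S x ∨ G.Adj x v ∧ ∃ u ∈ S, G.dist x u = 2

section Decidable

variable [Fintype V] [DecidableEq V] [DecidableRel G.Adj] (D P : Set V) [DecidablePred (· ∈ D)]
  [DecidablePred (· ∈ P)]

instance (x : V) : Decidable (DisjDominates G D x) := by
  unfold DisjDominates; infer_instance

instance : Decidable (DisjDominatesOn G D P) := by
  unfold DisjDominatesOn; infer_instance

instance (v : V) : Decidable (NearlyDisjDominatesOn G v D P) := by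
  unfold NearlyDisjDominatesOn; infer_instance

end Decidable

variable {D D' S P : Set V} {v x : V}

theorem DisjDominates.mono (h : DisjDominates G D x) (hD : D ⊆ D') : DisjDominates G D' x := by
  rcases h with ⟨u, hu, hxu⟩ | ⟨u, hu, w, hw, huw, hxu, hxw⟩
  · exact Or.inl ⟨u, hD hu, hxu⟩
  · exact Or.inr ⟨u, hD hu, w, hD hw, huw, hxu, hxw⟩

theorem DisjDominates.map (f : H ↪g G) {D : Set W} {x : W} (h : DisjDominates H D x) :
    DisjDominates G (f '' D) (f x) := by
  rcases h with ⟨u, hu, hxu⟩ | ⟨u, hu, w, hw, huw, hxu, hxw⟩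
  · exact Or.inl ⟨f u, mem_image_of_mem f hu, f.map_adj_iff.mpr hxu⟩
  · exact Or.inr ⟨f u, mem_image_of_mem f hu, f w, mem_image_of_mem f hw, f.injective.ne huw,
      f.dist_eq_two hxu, f.dist_eq_two hxw⟩

theorem DisjDominatesOn.map (f : H ↪g G) {D Q : Set W} (h : DisjDominatesOn H D Q) :
    DisjDominatesOn G (f '' D) (f '' Q) := by
  rintro _ ⟨x, hx, rfl⟩ hxD
  exact (h x hx fun hxD' => hxD (mem_image_of_mem f hxD')).map f

theorem NearlyDisjDominatesOn.map (f : H ↪g G) {r : W} {S Q : Set W}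
    (h : NearlyDisjDominatesOn H r S Q) : NearlyDisjDominatesOn G (f r) (f '' S) (f '' Q) := by
  rintro _ ⟨x, hx, rfl⟩ hxS
  rcases h x hx fun hxS' => hxS (mem_image_of_mem f hxS') with hdom | ⟨hxr, u, hu, hxu⟩
  · exact Or.inl (hdom.map f)
  · exact Or.inr ⟨f.map_adj_iff.mpr hxr, f u, mem_image_of_mem f hu, f.dist_eq_two hxu⟩

theorem DisjDominatesOn.nearlyDisjDominatesOn (h : DisjDominatesOn G S P) :
    NearlyDisjDominatesOn G v S P :=
  fun x hx hxS => Or.inl (h x hx hxS)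

theorem NearlyDisjDominatesOn.disjDominatesOn_insert (h : NearlyDisjDominatesOn G v S P) :
    DisjDominatesOn G (insert v S) P := by
  intro x hx hxS
  rcases h x hx fun h => hxS (Or.inr h) with hdom | ⟨hxv, -⟩
  · exact hdom.mono (subset_insert v S)
  · exact Or.inl ⟨v, mem_insert v S, hxv⟩

end Domination

/-- The five ways a gadget is dominated: `big` for `C₃`, `C_{3,3}`, `C_{4,2}`, `C_{5,1}`;
`far` for `C_{3,2}`, `C_{5,3}`; `near` for `C_{3,1}`, `C_{4,3}`, `C_{5,2}`; `needy` for
`C_{4,1}`, `C₅`; `square` for `C₄`. -/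
inductive GadgetKind
  | big | far | near | needy | square

namespace GadgetKind

def slack : GadgetKind → ℕ
  | big => 2
  | far | needy => 1
  | near | square => 0

variable {V W : Type*} {G : SimpleGraph V} {H : SimpleGraph W} {v : V} {P : Set V}
  {κ : GadgetKind}

/-- Each `S` stands for `D ∩ P`. -/
def Certified (G : SimpleGraph V) (v : V) (P : Set V) : GadgetKind → Prop
  | big => ∃ S ⊆ P, DisjDominatesOn G (insert v S) P ∧ 3 * S.ncard + 2 ≤ P.ncard
  | far => ∃ S ⊆ P, DisjDominatesOn G S P ∧ 3 * S.ncard + 1 ≤ P.ncard ∧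
      ∃ u ∈ S, G.dist v u = 2
  | near => ∃ S ⊆ P, DisjDominatesOn G S P ∧ 3 * S.ncard ≤ P.ncard ∧ ∃ u ∈ S, G.Adj v u
  | needy => ∃ S ⊆ P, NearlyDisjDominatesOn G v S P ∧ 3 * S.ncard + 1 ≤ P.ncard ∧ P.ncard ≤ 4
  | square =>
      (∃ S ⊆ P, DisjDominatesOn G S P ∧ 3 * S.ncard ≤ P.ncard ∧ ∃ u ∈ S, G.dist v u = 2) ∧
      (∃ S ⊆ P, NearlyDisjDominatesOn G v S P ∧ 3 * S.ncard ≤ P.ncard ∧ ∃ u ∈ S, G.Adj v u) ∧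
      P.ncard ≤ 3

theorem Certified.map (f : H ↪g G) {r : W} {Q : Set W} (h : κ.Certified H r Q) :
    κ.Certified G (f r) (f '' Q) := by
  have hcard (T : Set W) : (f '' T).ncard = T.ncard := ncard_image_of_injective T f.injective
  have hadj {S : Set W} : (∃ u ∈ S, H.Adj r u) → ∃ u ∈ f '' S, G.Adj (f r) u :=
    fun ⟨u, hu, hru⟩ => ⟨f u, mem_image_of_mem f hu, f.map_adj_iff.mpr hru⟩
  have hdist {S : Set W} : (∃ u ∈ S, H.dist r u = 2) → ∃ u ∈ f '' S, G.dist (f r) u = 2 :=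
    fun ⟨u, hu, hru⟩ => ⟨f u, mem_image_of_mem f hu, f.dist_eq_two hru⟩
  cases κ with
  | big =>
    obtain ⟨S, hSQ, hdom, hS⟩ := h
    refine ⟨f '' S, image_mono hSQ, ?_, by rwa [hcard, hcard]⟩
    simpa only [image_insert_eq] using hdom.map f
  | far =>
    obtain ⟨S, hSQ, hdom, hS, hr⟩ := h
    exact ⟨f '' S, image_mono hSQ, hdom.map f, by rwa [hcard, hcard], hdist hr⟩
  | near =>
    obtain ⟨S, hSQ, hdom, hS, hr⟩ := h
    exact ⟨f '' S, image_mono hSQ, hdom.map f, by rwa [hcard, hcard], hadj hr⟩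
  | needy =>
    obtain ⟨S, hSQ, hdom, hS, hQ⟩ := h
    exact ⟨f '' S, image_mono hSQ, hdom.map f, by rwa [hcard, hcard], by rwa [hcard]⟩
  | square =>
    obtain ⟨⟨S, hSQ, hdom, hS, hr⟩, ⟨T, hTQ, hdomT, hT, hrT⟩, hQ⟩ := h
    exact ⟨⟨f '' S, image_mono hSQ, hdom.map f, by rwa [hcard, hcard], hdist hr⟩,
      ⟨f '' T, image_mono hTQ, hdomT.map f, by rwa [hcard, hcard], hadj hrT⟩, by rwa [hcard]⟩

theorem Certified.of_induce_iso (hv : v ∉ P) (e : G.induce (P ∪ {v}) ≃g H)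
    (h : κ.Certified H (e ⟨v, Or.inr rfl⟩) {e ⟨v, Or.inr rfl⟩}ᶜ) : κ.Certified G v P := by
  set r := e ⟨v, Or.inr rfl⟩
  let f : H ↪g G := (Embedding.induce _).comp e.symm.toEmbedding
  have hfr : f r = v := by simp [f, r]
  have hrange : range f = insert v P := by
    change range (Subtype.val ∘ e.symm) = _
    rw [e.symm.surjective.range_comp, Subtype.range_coe, union_singleton]
  have hvf : v ∉ f '' {r}ᶜ := by
    rintro ⟨a, ha, hav⟩
    exact ha (f.injective (hav.trans hfr.symm))
  have hP : f '' {r}ᶜ = P := by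
    rw [← insert_sdiff_self_of_notMem hvf, ← hfr, insert_image_compl_eq_range, hrange, hfr,
      insert_sdiff_self_of_notMem hv]
  simpa only [hfr, hP] using h.map f

theorem Certified.exists_disjDominatesOn_insert (h : κ.Certified G v P) :
    ∃ S ⊆ P, DisjDominatesOn G (insert v S) P ∧ 3 * S.ncard + κ.slack ≤ P.ncard := by
  cases κ with
  | big => exact h
  | far | near =>
    obtain ⟨S, hSP, hdom, hS, -⟩ := h
    exact ⟨S, hSP, hdom.nearlyDisjDominatesOn.disjDominatesOn_insert, hS⟩
  | needy =>
    obtain ⟨S, hSP, hdom, hS, -⟩ := h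
    exact ⟨S, hSP, hdom.disjDominatesOn_insert, hS⟩
  | square =>
    obtain ⟨⟨S, hSP, hdom, hS, -⟩, -⟩ := h
    exact ⟨S, hSP, hdom.nearlyDisjDominatesOn.disjDominatesOn_insert, hS⟩

theorem Certified.exists_disjDominatesOn (h : κ.Certified G v P)
    (hκ : κ = near ∨ κ = far ∨ κ = square) :
    ∃ S ⊆ P, DisjDominatesOn G S P ∧ 3 * S.ncard ≤ P.ncard ∧
      ((∃ u ∈ S, G.Adj v u) ∨ ∃ u ∈ S, G.dist v u = 2) := by
  rcases hκ with rfl | rfl | rfl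
  · obtain ⟨S, hSP, hdom, hS, hvS⟩ := h
    exact ⟨S, hSP, hdom, hS, Or.inl hvS⟩
  · obtain ⟨S, hSP, hdom, hS, hvS⟩ := h
    exact ⟨S, hSP, hdom, by omega, Or.inr hvS⟩
  · obtain ⟨⟨S, hSP, hdom, hS, hvS⟩, -⟩ := h
    exact ⟨S, hSP, hdom, hS, Or.inr hvS⟩

theorem Certified.exists_nearlyDisjDominatesOn (h : κ.Certified G v P)
    (hκ : κ = near ∨ κ = square) :
    ∃ S ⊆ P, NearlyDisjDominatesOn G v S P ∧ 3 * S.ncard ≤ P.ncard ∧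
      (∃ u ∈ S, G.Adj v u) ∧ (DisjDominatesOn G S P ∨ P.ncard ≤ 3) := by
  rcases hκ with rfl | rfl
  · obtain ⟨S, hSP, hdom, hS, hvS⟩ := h
    exact ⟨S, hSP, hdom.nearlyDisjDominatesOn, hS, hvS, Or.inl hdom⟩
  · obtain ⟨-, ⟨S, hSP, hdom, hS, hvS⟩, hP⟩ := h
    exact ⟨S, hSP, hdom, hS, hvS, Or.inr hP⟩

theorem Certified.ncard_le_four (h : needy.Certified G v P) : P.ncard ≤ 4 := by
  obtain ⟨-, -, -, -, hP⟩ := h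
  exact hP

theorem eq_near_or_square_of_slack_eq_zero (h : κ.slack = 0) : κ = near ∨ κ = square := by
  cases κ <;> simp_all [slack]

theorem eq_near_or_far_or_square (h : κ.slack ≤ 1) (hκ : κ ≠ needy) :
    κ = near ∨ κ = far ∨ κ = square := by
  cases κ <;> simp_all [slack]

end GadgetKind

open GadgetKind

theorem tadpoleGraph_certified {s k : ℕ} (hs : s ∈ ({3, 4, 5} : Set ℕ))
    (hk : k ∈ ({1, 2, 3} : Set ℕ)) {r : Fin (s + k)} (hr : (r : ℕ) = s + k - 1) :
    ∃ κ : GadgetKind, κ.Certified (tadpoleGraph s k) r {r}ᶜ := by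
  simp only [mem_insert_iff, mem_singleton_iff] at hs hk
  rcases hs with rfl | rfl | rfl <;> rcases hk with rfl | rfl | rfl <;>
    obtain rfl : r = Fin.last _ := Fin.ext hr
  · exact ⟨near, {0}, by simp, by decide, by simp [ncard_compl_singleton], by decide⟩
  · exact ⟨far, {0}, by simp, by decide, by simp [ncard_compl_singleton], by decide⟩
  · exact ⟨big, {0}, by simp, by decide, by simp [ncard_compl_singleton]⟩
  · exact ⟨needy, {2}, by simp, by decide, by simp [ncard_compl_singleton],
      by simp [ncard_compl_singleton]⟩
  · exact ⟨big, {2}, by simp, by decide, by simp [ncard_compl_singleton]⟩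
  · exact ⟨near, {2, 5}, by simp, by decide, by simp [ncard_compl_singleton], by decide⟩
  · exact ⟨big, {2}, by simp, by decide, by simp [ncard_compl_singleton]⟩
  · exact ⟨near, {2, 5}, by simp, by decide, by simp [ncard_compl_singleton], by decide⟩
  · exact ⟨far, {2, 5}, by simp, by decide, by simp [ncard_compl_singleton], by decide⟩

theorem cycleGraph_certified {c : ℕ} (hc : c ∈ ({3, 4, 5} : Set ℕ)) (r : Fin c) :
    ∃ κ : GadgetKind, κ.Certified (cycleGraph c) r {r}ᶜ := by
  simp only [mem_insert_iff, mem_singleton_iff] at hc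
  rcases hc with rfl | rfl | rfl
  · have hdom : ∀ r : Fin 3, DisjDominatesOn (cycleGraph 3) (insert r ∅) {r}ᶜ := by decide
    exact ⟨big, ∅, by simp, hdom r, by simp [ncard_compl_singleton]⟩
  · have hfar : ∀ r : Fin 4,
        DisjDominatesOn (cycleGraph 4) {r + 2} {r}ᶜ ∧ (cycleGraph 4).dist r (r + 2) = 2 := by
      decide
    have hnear : ∀ r : Fin 4,
        NearlyDisjDominatesOn (cycleGraph 4) r {r + 1} {r}ᶜ ∧ (cycleGraph 4).Adj r (r + 1) := by
      decide
    exact ⟨square,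
      ⟨{r + 2}, by simp, (hfar r).1, by simp [ncard_compl_singleton], r + 2, rfl, (hfar r).2⟩,
      ⟨{r + 1}, by simp, (hnear r).1, by simp [ncard_compl_singleton], r + 1, rfl, (hnear r).2⟩,
      by simp [ncard_compl_singleton]⟩
  · have hdom : ∀ r : Fin 5, NearlyDisjDominatesOn (cycleGraph 5) r {r + 2} {r}ᶜ := by decide
    exact ⟨needy, {r + 2}, by simp, hdom r, by simp [ncard_compl_singleton],
      by simp [ncard_compl_singleton]⟩

theorem exists_certified {V : Type*} {G : SimpleGraph V} {v : V} {P : Set V} (hv : v ∉ P)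
    (h : (∃ s ∈ ({3, 4, 5} : Set ℕ), ∃ k ∈ ({1, 2, 3} : Set ℕ),
        ∃ e : G.induce (P ∪ {v}) ≃g tadpoleGraph s k,
          ((e ⟨v, Or.inr rfl⟩ : Fin (s + k)) : ℕ) = s + k - 1) ∨
      (∃ c ∈ ({3, 4, 5} : Set ℕ), Nonempty (G.induce (P ∪ {v}) ≃g cycleGraph c))) :
    ∃ κ : GadgetKind, κ.Certified G v P := by
  rcases h with ⟨s, hs, k, hk, e, hroot⟩ | ⟨c, hc, ⟨e⟩⟩
  · obtain ⟨κ, hκ⟩ := tadpoleGraph_certified hs hk hroot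
    exact ⟨κ, .of_induce_iso hv e hκ⟩
  · obtain ⟨κ, hκ⟩ := cycleGraph_certified hc (e ⟨v, Or.inr rfl⟩)
    exact ⟨κ, .of_induce_iso hv e hκ⟩

/-- `G` is the union of the graphs induced on the sets `P i ∪ {v}`, glued at `v`. -/
structure IsBouquet {V ι : Type*} (G : SimpleGraph V) (v : V) (P : ι → Set V) : Prop where
  existsUnique_mem : ∀ w, w ≠ v → ∃! i, w ∈ P i
  notMem : ∀ i, v ∉ P i
  not_adj : ∀ i j, i ≠ j → ∀ a ∈ P i, ∀ b ∈ P j, ¬G.Adj a b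

namespace IsBouquet

variable {V ι : Type*} {G : SimpleGraph V} {v : V} {P : ι → Set V}

theorem ne_of_mem (hB : IsBouquet G v P) {i j : ι} (hij : i ≠ j) {a b : V} (ha : a ∈ P i)
    (hb : b ∈ P j) : a ≠ b := by
  rintro rfl
  exact hij ((hB.existsUnique_mem a fun h => hB.notMem i (h ▸ ha)).unique ha hb)

theorem dist_eq_two (hB : IsBouquet G v P) {i j : ι} (hij : i ≠ j) {a b : V} (ha : a ∈ P i)
    (hb : b ∈ P j) (hav : G.Adj a v) (hvb : G.Adj v b) : G.dist a b = 2 :=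
  dist_eq_two_iff.mpr ⟨hB.ne_of_mem hij ha hb, hB.not_adj i j hij a ha b hb, v, hav, hvb⟩

theorem isDisjDomSet_insert_iUnion (hB : IsBouquet G v P) {S : ι → Set V}
    (hS : ∀ i, DisjDominatesOn G (insert v (S i)) (P i)) :
    IsDisjDomSet G (insert v (⋃ i, S i)) := by
  intro x hx
  obtain ⟨i, hi, -⟩ := hB.existsUnique_mem x fun h => hx (Or.inl h)
  have hsub : insert v (S i) ⊆ insert v (⋃ j, S j) := insert_subset_insert (subset_iUnion S i)
  exact (hS i x hi fun h => hx (hsub h)).mono hsub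

theorem isDisjDomSet_iUnion (hB : IsBouquet G v P) {S : ι → Set V} (hSP : ∀ i, S i ⊆ P i)
    (hS : ∀ i, NearlyDisjDominatesOn G v (S i) (P i)) (hv : DisjDominates G (⋃ i, S i) v)
    (hhelp : ∀ i, DisjDominatesOn G (S i) (P i) ∨ ∃ j ≠ i, ∃ a ∈ S j, G.Adj v a) :
    IsDisjDomSet G (⋃ i, S i) := by
  intro x hx
  by_cases hxv : x = v
  · subst hxv
    exact hv
  obtain ⟨i, hi, -⟩ := hB.existsUnique_mem x hxv
  have hsub : S i ⊆ ⋃ j, S j := subset_iUnion S i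
  have hxS : x ∉ S i := fun h => hx (hsub h)
  rcases hS i x hi hxS with hdom | ⟨hadj, u, hu, hxu⟩
  · exact hdom.mono hsub
  rcases hhelp i with hself | ⟨j, hji, a, ha, hva⟩
  · exact (hself x hi hxS).mono hsub
  · exact Or.inr ⟨u, hsub hu, a, mem_iUnion_of_mem j ha,
      hB.ne_of_mem hji.symm (hSP i hu) (hSP j ha), hxu,
      hB.dist_eq_two hji.symm hi (hSP j ha) hadj hva⟩

variable [Fintype V] [Fintype ι]

theorem card_eq (hB : IsBouquet G v P) : Fintype.card V = 1 + ∑ i, (P i).ncard := by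
  have huniv : (univ : Set V) = insert v (⋃ i, P i) := by
    refine (eq_univ_of_forall fun x => ?_).symm
    by_cases hx : x = v
    · exact Or.inl hx
    · obtain ⟨i, hi, -⟩ := hB.existsUnique_mem x hx
      exact Or.inr (mem_iUnion_of_mem i hi)
  have hdisj : Pairwise (Function.onFun Disjoint P) := fun i j hij =>
    disjoint_left.mpr fun _ ha hb => hB.ne_of_mem hij ha hb rfl
  rw [← Nat.card_eq_fintype_card, ← ncard_univ, huniv,
    ncard_insert_of_notMem (by simpa using hB.notMem), ncard_iUnion_of_finite
      (fun _ => toFinite _) hdisj, finsum_eq_sum_of_fintype, add_comm]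

theorem exists_ne_ne_of_ncard_add_ncard_lt (hB : IsBouquet G v P) {i j : ι} (hij : i ≠ j)
    (h : (P i).ncard + (P j).ncard + 1 < Fintype.card V) : ∃ k ≠ i, k ≠ j := by
  classical
  by_contra! hk
  have hsub : (Finset.univ : Finset ι) ⊆ {i, j} := fun k _ => by
    rcases eq_or_ne k i with rfl | hki
    · simp
    · simp [hk k hki]
  have hsum := Finset.sum_le_sum_of_subset (f := fun i => (P i).ncard) hsub
  rw [Finset.sum_pair hij] at hsum
  have := hB.card_eq
  omega

theorem three_mul_ncard_iUnion_add_sum_lt (hB : IsBouquet G v P) {S : ι → Set V} (w : ι → ℕ)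
    (h : ∀ i, 3 * (S i).ncard + w i ≤ (P i).ncard) :
    3 * (⋃ i, S i).ncard + ∑ i, w i < Fintype.card V := by
  have hunion := ncard_iUnion_le_of_fintype S
  have hsum : ∑ i, (3 * (S i).ncard + w i) ≤ ∑ i, (P i).ncard :=
    Finset.sum_le_sum fun i _ => h i
  rw [Finset.sum_add_distrib, ← Finset.mul_sum] at hsum
  rw [hB.card_eq]
  omega

theorem three_mul_ncard_iUnion_le (hB : IsBouquet G v P) {S : ι → Set V}
    (h : ∀ i, 3 * (S i).ncard ≤ (P i).ncard) : 3 * (⋃ i, S i).ncard ≤ Fintype.card V := by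
  simpa using (hB.three_mul_ncard_iUnion_add_sum_lt (fun _ => 0) h).le

variable {κ : ι → GadgetKind}

theorem exists_of_two_le_sum_slack (hB : IsBouquet G v P)
    (hκ : ∀ i, (κ i).Certified G v (P i)) (hslack : 2 ≤ ∑ i, (κ i).slack) :
    ∃ D, IsDisjDomSet G D ∧ 3 * D.ncard ≤ Fintype.card V := by
  choose S _ hS hcard using fun i => (hκ i).exists_disjDominatesOn_insert
  refine ⟨insert v (⋃ i, S i), hB.isDisjDomSet_insert_iUnion hS, ?_⟩
  have hinsert := ncard_insert_le v (⋃ i, S i)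
  have hunion := hB.three_mul_ncard_iUnion_add_sum_lt _ hcard
  omega

theorem exists_of_forall_ne_needy (hB : IsBouquet G v P)
    (hκ : ∀ i, (κ i).Certified G v (P i)) (hnum : 2 ≤ Fintype.card ι)
    (hslack : ∑ i, (κ i).slack ≤ 1) (hneedy : ∀ i, κ i ≠ needy) :
    ∃ D, IsDisjDomSet G D ∧ 3 * D.ncard ≤ Fintype.card V := by
  have hkind (i : ι) : κ i = near ∨ κ i = far ∨ κ i = square :=
    eq_near_or_far_or_square
      ((Finset.single_le_sum (fun _ _ => Nat.zero_le _) (Finset.mem_univ i)).trans hslack)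
      (hneedy i)
  choose S hSP hS hcard hflag using fun i => (hκ i).exists_disjDominatesOn (hkind i)
  refine ⟨⋃ i, S i, hB.isDisjDomSet_iUnion hSP (fun i => (hS i).nearlyDisjDominatesOn) ?_
    (fun i => Or.inl (hS i)), hB.three_mul_ncard_iUnion_le hcard⟩
  by_cases hadj : ∃ i, ∃ u ∈ S i, G.Adj v u
  · obtain ⟨i, u, hu, hvu⟩ := hadj
    exact Or.inl ⟨u, mem_iUnion_of_mem i hu, hvu⟩
  have hfar (i : ι) : ∃ u ∈ S i, G.dist v u = 2 := (hflag i).resolve_left fun h => hadj ⟨i, h⟩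
  obtain ⟨i, j, hij⟩ := Fintype.exists_pair_of_one_lt_card hnum
  obtain ⟨u, hu, hvu⟩ := hfar i
  obtain ⟨w, hw, hvw⟩ := hfar j
  exact Or.inr ⟨u, mem_iUnion_of_mem i hu, w, mem_iUnion_of_mem j hw,
    hB.ne_of_mem hij (hSP i hu) (hSP j hw), hvu, hvw⟩

theorem exists_of_needy (hB : IsBouquet G v P) (hκ : ∀ i, (κ i).Certified G v (P i))
    (hnum : 2 ≤ Fintype.card ι) (hcard : 9 ≤ Fintype.card V) {i₀ : ι} (hi₀ : κ i₀ = needy)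
    (hslack : ∑ i, (κ i).slack ≤ 1) :
    ∃ D, IsDisjDomSet G D ∧ 3 * D.ncard ≤ Fintype.card V := by
  have hκ₀ : needy.Certified G v (P i₀) := hi₀ ▸ hκ i₀
  have hothers (j : ι) (hj : j ≠ i₀) : κ j = near ∨ κ j = square := by
    refine eq_near_or_square_of_slack_eq_zero ?_
    have hpair : (κ i₀).slack + (κ j).slack ≤ ∑ i, (κ i).slack :=
      Finset.add_le_sum (f := fun i => (κ i).slack) (fun _ _ => Nat.zero_le _)
        (Finset.mem_univ i₀) (Finset.mem_univ j) hj.symm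
    rw [hi₀, show needy.slack = 1 from rfl] at hpair
    omega
  have hloc (i : ι) : ∃ S ⊆ P i, NearlyDisjDominatesOn G v S (P i) ∧
      3 * S.ncard ≤ (P i).ncard ∧
      (i ≠ i₀ → (∃ u ∈ S, G.Adj v u) ∧ (DisjDominatesOn G S (P i) ∨ (P i).ncard ≤ 3)) := by
    by_cases hi : i = i₀
    · subst hi
      obtain ⟨S, hSP, hS, hcardS, -⟩ := hκ₀
      exact ⟨S, hSP, hS, by omega, fun h => (h rfl).elim⟩
    · obtain ⟨S, hSP, hS, hcardS, hflag⟩ := (hκ i).exists_nearlyDisjDominatesOn (hothers i hi)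
      exact ⟨S, hSP, hS, hcardS, fun _ => hflag⟩
  choose S hSP hS hcardS hflag using hloc
  have hthird (i : ι) (hi : i ≠ i₀) (hPi : (P i).ncard ≤ 3) : ∃ k ≠ i, k ≠ i₀ :=
    hB.exists_ne_ne_of_ncard_add_ncard_lt hi (by have := hκ₀.ncard_le_four; omega)
  obtain ⟨j₀, hj₀⟩ := Fintype.exists_ne_of_one_lt_card hnum i₀
  have hadj (j : ι) (hj : j ≠ i₀) : ∃ a ∈ S j, G.Adj v a := ((hflag j) hj).1
  refine ⟨⋃ i, S i, hB.isDisjDomSet_iUnion hSP hS ?_ ?_, hB.three_mul_ncard_iUnion_le hcardS⟩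
  · obtain ⟨a, ha, hva⟩ := hadj j₀ hj₀
    exact Or.inl ⟨a, mem_iUnion_of_mem j₀ ha, hva⟩
  · intro i
    by_cases hi : i = i₀
    · exact Or.inr ⟨j₀, hi ▸ hj₀, hadj j₀ hj₀⟩
    rcases ((hflag i) hi).2 with hself | hPi
    · exact Or.inl hself
    · obtain ⟨k, hki, hk₀⟩ := hthird i hi hPi
      exact Or.inr ⟨k, hki, hadj k hk₀⟩

end IsBouquet

theorem disjDomNum_le_ncard {V : Type*} {G : SimpleGraph V} {D : Set V}
    (hD : IsDisjDomSet G D) : disjDomNum G ≤ D.ncard :=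
  Nat.sInf_le ⟨D, hD, rfl⟩

/-- Let `G` be a graph obtained as follows: take a single vertex `v` and finitely many
gadgets (indexed by `ι`, at least two of them, with vertex sets `P i ∪ {v}` partitioning
`V(G)` so that distinct gadgets meet only in `v` and there are no edges between distinct
gadgets), each gadget being either a tadpole `C_{s,k}` with `s ∈ {3,4,5}`, `k ∈ {1,2,3}`
whose leaf is identified with `v`, or a cycle `C₃`, `C₄` or `C₅` with one vertex identified
with `v`.  If `|V(G)| ≥ 9`, then `γ₂ᵈ(G) ≤ |V(G)|/3`. -/
theorem disjDomNum_le_third_of_gadgets {V : Type*} [Fintype V] (G : SimpleGraph V) (v : V)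
    {ι : Type*} [Fintype ι] (P : ι → Set V)
    (hcov : ∀ w : V, w ≠ v → ∃! i : ι, w ∈ P i)
    (hv : ∀ i : ι, v ∉ P i)
    (hnum : 2 ≤ Fintype.card ι)
    (hsep : ∀ i j : ι, i ≠ j → ∀ a ∈ P i, ∀ b ∈ P j, ¬ G.Adj a b)
    (hgadget : ∀ i : ι,
      (∃ s ∈ ({3, 4, 5} : Set ℕ), ∃ k ∈ ({1, 2, 3} : Set ℕ),
        ∃ e : G.induce (P i ∪ {v}) ≃g tadpoleGraph s k,
          ((e ⟨v, Or.inr rfl⟩ : Fin (s + k)) : ℕ) = s + k - 1) ∨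
      (∃ c ∈ ({3, 4, 5} : Set ℕ),
        Nonempty (G.induce (P i ∪ {v}) ≃g SimpleGraph.cycleGraph c)))
    (hcard : 9 ≤ Fintype.card V) :
    (disjDomNum G : ℝ) ≤ (Fintype.card V : ℝ) / 3 := by
  have hB : IsBouquet G v P := ⟨hcov, hv, hsep⟩
  choose κ hκ using fun i => exists_certified (hv i) (hgadget i)
  obtain ⟨D, hD, hDcard⟩ : ∃ D, IsDisjDomSet G D ∧ 3 * D.ncard ≤ Fintype.card V := by
    by_cases hslack : 2 ≤ ∑ i, (κ i).slack
    · exact hB.exists_of_two_le_sum_slack hκ hslack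
    by_cases hneedy : ∃ i₀, κ i₀ = needy
    · obtain ⟨i₀, hi₀⟩ := hneedy
      exact hB.exists_of_needy hκ hnum hcard hi₀ (by omega)
    · exact hB.exists_of_forall_ne_needy hκ hnum (by omega) fun i hi => hneedy ⟨i, hi⟩
  have hγ := disjDomNum_le_ncard hD
  rw [le_div_iff₀ three_pos]
  exact_mod_cast (by omega : disjDomNum G * 3 ≤ Fintype.card V)
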